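/- arXiv:2002.07944 — 2 statements merged into one kernel-verified Lean document; each statement's English description precedes it below -/
import Mathlib

section
/- Subject reduction: if Γ ⊢ t : A in the simply typed distributive λ-calculus with typing up to distributivity, and t → s, then Γ ⊢ s : A. -/
inductive Tm : Type
| var : ℕ → Tm
| lam : Tm → Tm
| app : Tm → Tm → Tm
| pair : Tm → Tm → Tm
| p1 : Tm → Tm
| p2 : Tm → Tm

namespace Tm

/-- Renaming of de Bruijn indices. -/
def rename (f : ℕ → ℕ) : Tm → Tm
| var n => var (f n)
| lam t => lam (t.rename (fun n => match n with | 0 => 0 | n+1 => f n + 1))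
| app t s => app (t.rename f) (s.rename f)
| pair t s => pair (t.rename f) (s.rename f)
| p1 t => p1 (t.rename f)
| p2 t => p2 (t.rename f)

/-- Capture-avoiding simultaneous substitution. -/
def subst (σ : ℕ → Tm) : Tm → Tm
| var n => σ n
| lam t => lam (t.subst (fun n => match n with | 0 => var 0 | n+1 => (σ n).rename Nat.succ))
| app t s => app (t.subst σ) (s.subst σ)
| pair t s => pair (t.subst σ) (s.subst σ)
| p1 t => p1 (t.subst σ)
| p2 t => p2 (t.subst σ)

/-- Substitution of the single (outermost) free variable: t[x := s]. -/
def subst1 (t s : Tm) : Tm :=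
  t.subst (fun n => match n with | 0 => s | n+1 => var n)

/-- One-step reduction of the distributive λ-calculus. -/
inductive Step : Tm → Tm → Prop
| beta (t s) : Step (app (lam t) s) (t.subst1 s)
| proj1 (t1 t2) : Step (p1 (pair t1 t2)) t1
| proj2 (t1 t2) : Step (p2 (pair t1 t2)) t2
| pairApp (t s u) : Step (app (pair t s) u) (pair (app t u) (app s u))
| projLam1 (t) : Step (p1 (lam t)) (lam (p1 t))
| projLam2 (t) : Step (p2 (lam t)) (lam (p2 t))
| lam_cong {t t'} : Step t t' → Step (lam t) (lam t')
| appL {t t' s} : Step t t' → Step (app t s) (app t' s)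
| appR {t s s'} : Step s s' → Step (app t s) (app t s')
| pairL {t t' s} : Step t t' → Step (pair t s) (pair t' s)
| pairR {t s s'} : Step s s' → Step (pair t s) (pair t s')
| p1_cong {t t'} : Step t t' → Step (p1 t) (p1 t')
| p2_cong {t t'} : Step t t' → Step (p2 t) (p2 t')

/-- Many-step reduction. -/
def Steps : Tm → Tm → Prop := Relation.ReflTransGen Step

/-- A term is normal when no rule applies anywhere in it. -/
def Normal (t : Tm) : Prop := ¬ ∃ s, Step t s

/-- All free variables are < k. -/
def closedUnder : ℕ → Tm → Prop
| k, var n => n < k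
| k, lam t => closedUnder (k+1) t
| k, app t s => closedUnder k t ∧ closedUnder k s
| k, pair t s => closedUnder k t ∧ closedUnder k s
| k, p1 t => closedUnder k t
| k, p2 t => closedUnder k t

def Closed (t : Tm) : Prop := closedUnder 0 t

/-- Values: variables, abstractions, pairs. -/
def IsValue : Tm → Prop
| var _ => True
| lam _ => True
| pair _ _ => True
| _ => False

/-- Neutral terms: variables, applications, projections. -/
def Neutral : Tm → Prop
| var _ => True
| app _ _ => True
| p1 _ => True
| p2 _ => True
| _ => False

/-- Strong normalization: every reduction sequence is finite. -/
def SN (t : Tm) : Prop := Acc (fun a b => Step b a) t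

end Tm

inductive Ty : Type
| base : Ty
| arr : Ty → Ty → Ty
| conj : Ty → Ty → Ty

/-- The least congruence containing distributivity A ⇒ (B ∧ C) ≡ (A ⇒ B) ∧ (A ⇒ C). -/
inductive Iso : Ty → Ty → Prop
| refl (A) : Iso A A
| symm {A B} : Iso A B → Iso B A
| trans {A B C} : Iso A B → Iso B C → Iso A C
| distr (A B C) : Iso (Ty.arr A (Ty.conj B C)) (Ty.conj (Ty.arr A B) (Ty.arr A C))
| arrL {A C} (B) : Iso A C → Iso (Ty.arr A B) (Ty.arr C B)
| arrR {B C} (A) : Iso B C → Iso (Ty.arr A B) (Ty.arr A C)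
| conjL {A C} (B) : Iso A C → Iso (Ty.conj A B) (Ty.conj C B)
| conjR {B C} (A) : Iso B C → Iso (Ty.conj A B) (Ty.conj A C)

/-- Typing, with contexts as lists of types (de Bruijn), including the conversion rule for ≡. -/
inductive Typing : List Ty → Tm → Ty → Prop
| var {Γ n A} : Γ[n]? = some A → Typing Γ (Tm.var n) A
| lam {Γ t A B} : Typing (A :: Γ) t B → Typing Γ (Tm.lam t) (Ty.arr A B)
| app {Γ t s A B} : Typing Γ t (Ty.arr A B) → Typing Γ s A → Typing Γ (Tm.app t s) B
| pair {Γ t s A B} : Typing Γ t A → Typing Γ s B → Typing Γ (Tm.pair t s) (Ty.conj A B)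
| p1 {Γ t A B} : Typing Γ t (Ty.conj A B) → Typing Γ (Tm.p1 t) A
| p2 {Γ t A B} : Typing Γ t (Ty.conj A B) → Typing Γ (Tm.p2 t) B
| iso {Γ t A B} : Typing Γ t A → Iso A B → Typing Γ t B

/-- Reducibility interpretation of types. -/
def Red : Ty → Tm → Prop
| Ty.base, t => Tm.SN t
| Ty.arr A B, t => ∀ s, Red A s → Red B (Tm.app t s)
| Ty.conj A B, t => Red A (Tm.p1 t) ∧ Red B (Tm.p2 t)


/-! Distributing every arrow over the conjunctions in its codomain turns a type into a tree of
conjunctions whose leaves are not conjunctions, and two types are `≡` exactly when these normal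
forms have the same shape and `≡` argument types at corresponding arrows. This gives the inversion
properties of `≡` (injectivity of `⇒` and `∧`, and the splitting of `C ∧ D ≡ A ⇒ B` into
`C ≡ A ⇒ B₁`, `D ≡ A ⇒ B₂`, `B ≡ B₁ ∧ B₂`) which, with the substitution lemma, make each redex
typeable at the type of its contractum. -/

namespace Ty

def arrDist (A : Ty) : Ty → Ty
  | conj B C => conj (arrDist A B) (arrDist A C)
  | T => arr A T

def nf : Ty → Ty
  | base => base
  | arr A B => arrDist A (nf B)
  | conj A B => conj (nf A) (nf B)

inductive StructIso : Ty → Ty → Prop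
  | base : StructIso base base
  | arr {A A' B B'} : Iso A A' → StructIso B B' → StructIso (arr A B) (arr A' B')
  | conj {A A' B B'} : StructIso A A' → StructIso B B' → StructIso (conj A B) (conj A' B')

namespace StructIso

theorem refl : ∀ A : Ty, StructIso A A
  | .base => .base
  | .arr A B => .arr (.refl A) (refl B)
  | .conj A B => .conj (refl A) (refl B)

theorem symm {A B : Ty} (h : StructIso A B) : StructIso B A := by
  induction h with
  | base => exact .base
  | arr hA _ ih => exact .arr hA.symm ih
  | conj _ _ ihA ihB => exact .conj ihA ihB

theorem trans {A B C : Ty} (h : StructIso A B) (h' : StructIso B C) : StructIso A C := by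
  induction h generalizing C with
  | base => exact h'
  | arr hA _ ih => cases h' with | arr hA' hB' => exact .arr (hA.trans hA') (ih hB')
  | conj _ _ ihA ihB => cases h' with | conj hA' hB' => exact .conj (ihA hA') (ihB hB')

theorem iso {A B : Ty} (h : StructIso A B) : Iso A B := by
  induction h with
  | base => exact .refl _
  | arr hA _ ih => exact (Iso.arrL _ hA).trans (Iso.arrR _ ih)
  | conj _ _ ihA ihB => exact (Iso.conjL _ ihA).trans (Iso.conjR _ ihB)

theorem arrDist {A A' T T' : Ty} (hA : Iso A A') (h : StructIso T T') :
    StructIso (Ty.arrDist A T) (Ty.arrDist A' T') := by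
  induction h with
  | base => exact .arr hA .base
  | arr hB hC => exact .arr hA (.arr hB hC)
  | conj _ _ ihB ihC => exact .conj ihB ihC

theorem of_arrDist {A A' : Ty} :
    ∀ {T T' : Ty}, StructIso (Ty.arrDist A T) (Ty.arrDist A' T') → Iso A A' ∧ StructIso T T'
  | .base, .base, .arr hA h | .base, .arr .., .arr hA h
  | .arr .., .base, .arr hA h | .arr .., .arr .., .arr hA h => ⟨hA, h⟩
  | .conj .., .conj .., .conj hB hC =>
    ⟨(of_arrDist hB).1, .conj (of_arrDist hB).2 (of_arrDist hC).2⟩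

end StructIso

theorem iso_arrDist (A : Ty) : ∀ T : Ty, Iso (arr A T) (arrDist A T)
  | base | arr .. => .refl _
  | conj B C => (Iso.distr A B C).trans ((Iso.conjL _ (iso_arrDist A B)).trans
      (Iso.conjR _ (iso_arrDist A C)))

theorem iso_nf : ∀ A : Ty, Iso A (nf A)
  | base => .refl _
  | arr A B => (Iso.arrR A (iso_nf B)).trans (iso_arrDist A (nf B))
  | conj A B => (Iso.conjL _ (iso_nf A)).trans (Iso.conjR _ (iso_nf B))

theorem structIso_nf_of_iso {A B : Ty} (h : Iso A B) : StructIso (nf A) (nf B) := by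
  induction h with
  | refl A => exact .refl _
  | symm _ ih => exact ih.symm
  | trans _ _ ih ih' => exact ih.trans ih'
  | distr A B C => exact .refl _
  | arrL B h => exact .arrDist h (.refl _)
  | arrR A _ ih => exact .arrDist (.refl A) ih
  | conjL B _ ih => exact .conj ih (.refl _)
  | conjR A _ ih => exact .conj (.refl _) ih

theorem iso_iff_structIso_nf {A B : Ty} : Iso A B ↔ StructIso (nf A) (nf B) :=
  ⟨structIso_nf_of_iso, fun h => ((iso_nf A).trans h.iso).trans (iso_nf B).symm⟩

end Ty

namespace Iso

open Ty

theorem arr_inj {A B C D : Ty} (h : Iso (arr A B) (arr C D)) : Iso A C ∧ Iso B D :=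
  let ⟨hA, hB⟩ := StructIso.of_arrDist (structIso_nf_of_iso h)
  ⟨hA, iso_iff_structIso_nf.2 hB⟩

theorem conj_inj {A B C D : Ty} (h : Iso (conj A B) (conj C D)) : Iso A C ∧ Iso B D := by
  obtain _ | _ | ⟨hA, hB⟩ := structIso_nf_of_iso h
  exact ⟨iso_iff_structIso_nf.2 hA, iso_iff_structIso_nf.2 hB⟩

theorem conj_arr_inv {A B C D : Ty} (h : Iso (conj C D) (arr A B)) :
    ∃ B₁ B₂, Iso B (conj B₁ B₂) ∧ Iso C (arr A B₁) ∧ Iso D (arr A B₂) := by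
  have h' : StructIso (conj (nf C) (nf D)) (arrDist A (nf B)) := structIso_nf_of_iso h
  have hB := iso_nf B
  rcases hnf : nf B with _ | _ | ⟨B₁, B₂⟩
  all_goals rw [hnf] at h' hB
  · cases h'
  · cases h'
  · obtain _ | _ | ⟨h₁, h₂⟩ := h'
    exact ⟨B₁, B₂, hB, ((iso_nf C).trans h₁.iso).trans (iso_arrDist A B₁).symm,
      ((iso_nf D).trans h₂.iso).trans (iso_arrDist A B₂).symm⟩

end Iso

namespace Typing

theorem rename {Γ Δ : List Ty} {t : Tm} {A : Ty} {f : ℕ → ℕ} (h : Typing Γ t A)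
    (hf : ∀ n B, Γ[n]? = some B → Δ[f n]? = some B) : Typing Δ (t.rename f) A := by
  induction h generalizing Δ f with
  | var h => exact .var (hf _ _ h)
  | lam _ ih => exact .lam (ih fun | 0, _, h => h | n + 1, B, h => hf n B h)
  | app _ _ ih ih' => exact .app (ih hf) (ih' hf)
  | pair _ _ ih ih' => exact .pair (ih hf) (ih' hf)
  | p1 _ ih => exact .p1 (ih hf)
  | p2 _ ih => exact .p2 (ih hf)
  | iso _ hiso ih => exact .iso (ih hf) hiso

theorem subst {Γ Δ : List Ty} {t : Tm} {A : Ty} {σ : ℕ → Tm} (h : Typing Γ t A)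
    (hσ : ∀ n B, Γ[n]? = some B → Typing Δ (σ n) B) : Typing Δ (t.subst σ) A := by
  induction h generalizing Δ σ with
  | var h => exact hσ _ _ h
  | lam _ ih =>
    exact .lam (ih fun
      | 0, _, h => .var h
      | n + 1, B, h => (hσ n B h).rename fun _ _ h => h)
  | app _ _ ih ih' => exact .app (ih hσ) (ih' hσ)
  | pair _ _ ih ih' => exact .pair (ih hσ) (ih' hσ)
  | p1 _ ih => exact .p1 (ih hσ)
  | p2 _ ih => exact .p2 (ih hσ)
  | iso _ hiso ih => exact .iso (ih hσ) hiso

theorem subst1 {Γ : List Ty} {t s : Tm} {A B : Ty} (ht : Typing (A :: Γ) t B)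
    (hs : Typing Γ s A) : Typing Γ (t.subst1 s) B :=
  ht.subst fun
    | 0, _, h => by cases h; exact hs
    | n + 1, _, h => .var h

theorem lam_inv {Γ : List Ty} {t : Tm} {E : Ty} (h : Typing Γ (Tm.lam t) E) :
    ∃ A B, Typing (A :: Γ) t B ∧ Iso (.arr A B) E := by
  generalize hu : Tm.lam t = u at h
  induction h with
  | lam ht => cases hu; exact ⟨_, _, ht, .refl _⟩
  | iso _ hiso ih => obtain ⟨A, B, ht, h⟩ := ih hu; exact ⟨A, B, ht, h.trans hiso⟩
  | _ => cases hu

theorem app_inv {Γ : List Ty} {t s : Tm} {E : Ty} (h : Typing Γ (Tm.app t s) E) :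
    ∃ A B, Typing Γ t (.arr A B) ∧ Typing Γ s A ∧ Iso B E := by
  generalize hu : Tm.app t s = u at h
  induction h with
  | app ht hs => cases hu; exact ⟨_, _, ht, hs, .refl _⟩
  | iso _ hiso ih => obtain ⟨A, B, ht, hs, h⟩ := ih hu; exact ⟨A, B, ht, hs, h.trans hiso⟩
  | _ => cases hu

theorem pair_inv {Γ : List Ty} {t s : Tm} {E : Ty} (h : Typing Γ (Tm.pair t s) E) :
    ∃ A B, Typing Γ t A ∧ Typing Γ s B ∧ Iso (.conj A B) E := by
  generalize hu : Tm.pair t s = u at h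
  induction h with
  | pair ht hs => cases hu; exact ⟨_, _, ht, hs, .refl _⟩
  | iso _ hiso ih => obtain ⟨A, B, ht, hs, h⟩ := ih hu; exact ⟨A, B, ht, hs, h.trans hiso⟩
  | _ => cases hu

theorem p1_inv {Γ : List Ty} {t : Tm} {E : Ty} (h : Typing Γ (Tm.p1 t) E) :
    ∃ A B, Typing Γ t (.conj A B) ∧ Iso A E := by
  generalize hu : Tm.p1 t = u at h
  induction h with
  | p1 ht => cases hu; exact ⟨_, _, ht, .refl _⟩
  | iso _ hiso ih => obtain ⟨A, B, ht, h⟩ := ih hu; exact ⟨A, B, ht, h.trans hiso⟩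
  | _ => cases hu

theorem p2_inv {Γ : List Ty} {t : Tm} {E : Ty} (h : Typing Γ (Tm.p2 t) E) :
    ∃ A B, Typing Γ t (.conj A B) ∧ Iso B E := by
  generalize hu : Tm.p2 t = u at h
  induction h with
  | p2 ht => cases hu; exact ⟨_, _, ht, .refl _⟩
  | iso _ hiso ih => obtain ⟨A, B, ht, h⟩ := ih hu; exact ⟨A, B, ht, h.trans hiso⟩
  | _ => cases hu

section Redexes

variable {Γ : List Ty} {E : Ty}

theorem beta {t s : Tm} (h : Typing Γ (Tm.app (Tm.lam t) s) E) : Typing Γ (t.subst1 s) E := by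
  obtain ⟨A, B, hlam, hs, hB⟩ := h.app_inv
  obtain ⟨A', B', ht, hiso⟩ := hlam.lam_inv
  obtain ⟨hA, hB'⟩ := hiso.arr_inj
  exact (ht.subst1 (hs.iso hA.symm)).iso (hB'.trans hB)

theorem proj1 {t₁ t₂ : Tm} (h : Typing Γ (Tm.p1 (Tm.pair t₁ t₂)) E) : Typing Γ t₁ E := by
  obtain ⟨A, B, hp, hA⟩ := h.p1_inv
  obtain ⟨A', B', ht, -, hiso⟩ := hp.pair_inv
  exact ht.iso (hiso.conj_inj.1.trans hA)

theorem proj2 {t₁ t₂ : Tm} (h : Typing Γ (Tm.p2 (Tm.pair t₁ t₂)) E) : Typing Γ t₂ E := by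
  obtain ⟨A, B, hp, hB⟩ := h.p2_inv
  obtain ⟨A', B', -, ht, hiso⟩ := hp.pair_inv
  exact ht.iso (hiso.conj_inj.2.trans hB)

theorem pairApp {t s u : Tm} (h : Typing Γ (Tm.app (Tm.pair t s) u) E) :
    Typing Γ (Tm.pair (Tm.app t u) (Tm.app s u)) E := by
  obtain ⟨A, B, hp, hu, hB⟩ := h.app_inv
  obtain ⟨C, D, ht, hs, hiso⟩ := hp.pair_inv
  obtain ⟨B₁, B₂, hB₁₂, hC, hD⟩ := hiso.conj_arr_inv
  exact (pair ((ht.iso hC).app hu) ((hs.iso hD).app hu)).iso (hB₁₂.symm.trans hB)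

theorem projLam1 {t : Tm} (h : Typing Γ (Tm.p1 (Tm.lam t)) E) : Typing Γ (Tm.lam (Tm.p1 t)) E := by
  obtain ⟨C, D, hl, hC⟩ := h.p1_inv
  obtain ⟨A, B, ht, hiso⟩ := hl.lam_inv
  obtain ⟨B₁, B₂, hB, hA₁, -⟩ := hiso.symm.conj_arr_inv
  exact (ht.iso hB).p1.lam.iso (hA₁.symm.trans hC)

theorem projLam2 {t : Tm} (h : Typing Γ (Tm.p2 (Tm.lam t)) E) : Typing Γ (Tm.lam (Tm.p2 t)) E := by
  obtain ⟨C, D, hl, hD⟩ := h.p2_inv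
  obtain ⟨A, B, ht, hiso⟩ := hl.lam_inv
  obtain ⟨B₁, B₂, hB, -, hA₂⟩ := hiso.symm.conj_arr_inv
  exact (ht.iso hB).p2.lam.iso (hA₂.symm.trans hD)

end Redexes

end Typing

theorem subject_reduction (Γ : List Ty) (t s : Tm) (A : Ty)
    (ht : Typing Γ t A) (hs : Tm.Step t s) : Typing Γ s A := by
  induction hs generalizing Γ A with
  | beta => exact ht.beta
  | proj1 => exact ht.proj1
  | proj2 => exact ht.proj2
  | pairApp => exact ht.pairApp
  | projLam1 => exact ht.projLam1
  | projLam2 => exact ht.projLam2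
  | lam_cong _ ih => obtain ⟨_, _, ht, hiso⟩ := ht.lam_inv; exact (ih _ _ ht).lam.iso hiso
  | appL _ ih => obtain ⟨_, _, ht, hu, hiso⟩ := ht.app_inv; exact ((ih _ _ ht).app hu).iso hiso
  | appR _ ih => obtain ⟨_, _, ht, hu, hiso⟩ := ht.app_inv; exact (ht.app (ih _ _ hu)).iso hiso
  | pairL _ ih => obtain ⟨_, _, ht, hu, hiso⟩ := ht.pair_inv; exact ((ih _ _ ht).pair hu).iso hiso
  | pairR _ ih => obtain ⟨_, _, ht, hu, hiso⟩ := ht.pair_inv; exact (ht.pair (ih _ _ hu)).iso hiso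
  | p1_cong _ ih => obtain ⟨_, _, ht, hiso⟩ := ht.p1_inv; exact (ih _ _ ht).p1.iso hiso
  | p2_cong _ ih => obtain ⟨_, _, ht, hiso⟩ := ht.p2_inv; exact (ih _ _ ht).p2.iso hiso
end

section
/- CR3: if t is a neutral term of the distributive λ-calculus (a variable, application, or projection) and every one-step reduct of t is in ⟦A⟧, then t ∈ ⟦A⟧. -/
/-!
Girard's reducibility-candidate argument. Call a set of terms a candidate when it consists of
strongly normalizing terms, is closed under reduction, and contains every neutral term all of whose
one-step reducts it contains. `SN` is a candidate, and candidates are closed under the function-space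
and product constructions that define `⟦A ⇒ B⟧` and `⟦A ∧ B⟧`, so every `⟦A⟧` is a candidate by
induction on `A`. The one delicate case is neutrality for `⟦A ⇒ B⟧`: for `t s` with `s ∈ ⟦A⟧` one
inducts on the strong normalization of `s`, a neutral head leaving only reductions inside `t` or `s`.
-/

namespace Tm

theorem SN.of_map {f : Tm → Tm} (hf : ∀ {t t'}, Step t t' → Step (f t) (f t')) {t : Tm}
    (h : SN (f t)) : SN t :=
  Subrelation.accessible (fun hs => hf hs) (InvImage.accessible f h)

structure IsCandidate (P : Tm → Prop) : Prop where
  sn : ∀ {t}, P t → SN t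
  step : ∀ {t t'}, P t → Step t t' → P t'
  neutral : ∀ {t}, Neutral t → (∀ s, Step t s → P s) → P t

theorem isCandidate_SN : IsCandidate SN :=
  ⟨id, fun h hs => h.inv hs, fun _ h => ⟨_, h⟩⟩

namespace IsCandidate

variable {P Q : Tm → Prop}

theorem var_mem (hP : IsCandidate P) (n : ℕ) : P (var n) :=
  hP.neutral trivial fun _ hs => nomatch hs

theorem app_mem_of_neutral (hP : IsCandidate P) (hQ : IsCandidate Q) {t : Tm} (hn : Neutral t)
    (ht : ∀ t', Step t t' → ∀ s, P s → Q (app t' s)) {s : Tm} (hs : P s) : Q (app t s) := by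
  induction hP.sn hs with
  | intro s _ ih =>
    refine hQ.neutral trivial fun u hu => ?_
    cases hu with
    | beta => exact hn.elim
    | pairApp => exact hn.elim
    | appL hstep => exact ht _ hstep _ hs
    | appR hstep => exact ih _ hstep (hP.step hs hstep)

theorem arrow (hP : IsCandidate P) (hQ : IsCandidate Q) :
    IsCandidate fun t => ∀ s, P s → Q (app t s) where
  sn h := SN.of_map Step.appL (hQ.sn (h _ (hP.var_mem 0)))
  step h hs s hsP := hQ.step (h s hsP) (Step.appL hs)
  neutral hn h _ hs := app_mem_of_neutral hP hQ hn h hs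

theorem conj (hP : IsCandidate P) (hQ : IsCandidate Q) :
    IsCandidate fun t => P (p1 t) ∧ Q (p2 t) where
  sn h := SN.of_map Step.p1_cong (hP.sn h.1)
  step h hs := ⟨hP.step h.1 (Step.p1_cong hs), hQ.step h.2 (Step.p2_cong hs)⟩
  neutral hn h := by
    constructor
    · refine hP.neutral trivial fun u hu => ?_
      cases hu with
      | proj1 => exact hn.elim
      | projLam1 => exact hn.elim
      | p1_cong hstep => exact (h _ hstep).1
    · refine hQ.neutral trivial fun u hu => ?_
      cases hu with
      | proj2 => exact hn.elim
      | projLam2 => exact hn.elim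
      | p2_cong hstep => exact (h _ hstep).2

end IsCandidate

end Tm

theorem isCandidate_red : ∀ A : Ty, Tm.IsCandidate (Red A)
  | .base => Tm.isCandidate_SN
  | .arr A B => (isCandidate_red A).arrow (isCandidate_red B)
  | .conj A B => (isCandidate_red A).conj (isCandidate_red B)

theorem cr3 (A : Ty) (t : Tm) (hn : t.Neutral) (h : ∀ s, Tm.Step t s → Red A s) :
    Red A t :=
  (isCandidate_red A).neutral hn h
end
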